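/- Let I_u^w(α,β) = {u cos λ + w sin λ : λ ∈ [α,β]} with −π/2 < α ≤ β < π/2, and let v ∈ S_u^+, w ∈ S_u ∩ S_v. Then tan h_v(I_u^w(α,β), w) = (tan β)/(u·v) and tan h_v(I_u^w(α,β), −w) = −(tan α)/(u·v). -/

import Mathlib

open scoped RealInnerProductSpace Pointwise
open Real

noncomputable section

/-- `Esp n` is the ambient Euclidean space `ℝ^{n+1}` containing the unit sphere `S^n`. -/
abbrev Esp (n : ℕ) : Type := EuclideanSpace ℝ (Fin (n + 1))

/-- The unit sphere `S^n ⊆ ℝ^{n+1}`. -/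
def uSphere (n : ℕ) : Set (Esp n) := {x | ‖x‖ = 1}

/-- `rad A = {λ • x : λ ≥ 0, x ∈ A}`. -/
def radSet {n : ℕ} (A : Set (Esp n)) : Set (Esp n) :=
  {y | ∃ l : ℝ, 0 ≤ l ∧ ∃ x ∈ A, y = l • x}

/-- A set `A ⊆ S^n` is spherically convex if `rad A` is convex. -/
def SphConvex {n : ℕ} (A : Set (Esp n)) : Prop := Convex ℝ (radSet A)

/-- The open hemisphere centered at `u`. -/
def openHemi {n : ℕ} (u : Esp n) : Set (Esp n) := {v | ‖v‖ = 1 ∧ 0 < ⟪u, v⟫}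

/-- The equator `S_u = {v ∈ S^n : u ⬝ v = 0}`. -/
def equator {n : ℕ} (u : Esp n) : Set (Esp n) := {v | ‖v‖ = 1 ∧ ⟪u, v⟫ = 0}

/-- Proper convex bodies contained in the open hemisphere centered at `u`:
the class `K_u^p(S^n)`. -/
def properBodies {n : ℕ} (u : Esp n) : Set (Set (Esp n)) :=
  {K | K.Nonempty ∧ IsClosed K ∧ K ⊆ openHemi u ∧ SphConvex K}

/-- All proper convex bodies `K^p(S^n)`. -/
def allProperBodies (n : ℕ) : Set (Set (Esp n)) :=
  {K | ∃ u : Esp n, ‖u‖ = 1 ∧ K ∈ properBodies u}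

/-- The gnomonic projection `g_u(v) = v/(u⬝v) − u`. -/
def gno {n : ℕ} (u v : Esp n) : Esp n := (⟪u, v⟫)⁻¹ • v - u

/-- The inverse gnomonic projection `x ↦ (x+u)/‖x+u‖`. -/
def gnoInv {n : ℕ} (u x : Esp n) : Esp n := ‖x + u‖⁻¹ • (x + u)

/-- The hyperplane `ℝ^n_u = u^⊥` of `ℝ^{n+1}`. -/
def hyper {n : ℕ} (u : Esp n) : Set (Esp n) := {x | ⟪u, x⟫ = 0}

/-- The class `K(ℝ^n_u)` of (nonempty) compact convex subsets of the hyperplane `u^⊥`. -/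
def cptCvx {n : ℕ} (u : Esp n) : Set (Set (Esp n)) :=
  {C | C.Nonempty ∧ IsCompact C ∧ Convex ℝ C ∧ C ⊆ hyper u}

/-- The spherical support function `h_u(K,v) = max {sgn(v⬝w) d(u, w|S_{u,v}) : w ∈ K}`,
where `d(u, w|S_{u,v}) = arccos ((u⬝w)/√((u⬝w)² + (v⬝w)²))`. -/
def sphSupp {n : ℕ} (u : Esp n) (K : Set (Esp n)) (v : Esp n) : ℝ :=
  sSup ((fun w => Real.sign ⟪v, w⟫ *
    Real.arccos (⟪u, w⟫ / Real.sqrt (⟪u, w⟫ ^ 2 + ⟪v, w⟫ ^ 2))) '' K)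

/-- The Euclidean support function `h(C,x) = sup {x ⬝ y : y ∈ C}`. -/
def esupp {n : ℕ} (C : Set (Esp n)) (x : Esp n) : ℝ :=
  sSup ((fun y => ⟪x, y⟫) '' C)

/-- Spherical (geodesic) distance on `S^n`. -/
def sphDist {n : ℕ} (x y : Esp n) : ℝ := Real.arccos ⟪x, y⟫

/-- The Hausdorff distance `δ_s` induced by the spherical distance. -/
def sphHaus {n : ℕ} (A B : Set (Esp n)) : ℝ :=
  sInf {r | 0 ≤ r ∧ (∀ a ∈ A, ∃ b ∈ B, sphDist a b ≤ r) ∧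
    (∀ b ∈ B, ∃ a ∈ A, sphDist a b ≤ r)}

/-- The metric `γ_u(K,L) = max_{v ∈ S_u} |h_u(K,v) − h_u(L,v)|`. -/
def gammaU {n : ℕ} (u : Esp n) (K L : Set (Esp n)) : ℝ :=
  sSup ((fun v => |sphSupp u K v - sphSupp u L v|) '' equator u)

/-- Spherical projection of `K` onto the great subsphere `V ∩ S^n`:
`K|S = (rad K | V) ∩ S^n`. -/
def sphProj {n : ℕ} (V : Submodule ℝ (Esp n)) (K : Set (Esp n)) : Set (Esp n) :=
  ((fun x => (Submodule.orthogonalProjectionOnto V x : Esp n)) '' radSet K) ∩ uSphere n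

/-- Orthogonal projection of a subset of `ℝ^{n+1}` onto a linear subspace `W`. -/
def eProj {n : ℕ} (W : Submodule ℝ (Esp n)) (C : Set (Esp n)) : Set (Esp n) :=
  (fun x => (Submodule.orthogonalProjectionOnto W x : Esp n)) '' C

/-- The spherical convex hull: the intersection of all spherically convex subsets of `S^n`
containing `A`. -/
def sphHull {n : ℕ} (A : Set (Esp n)) : Set (Esp n) :=
  ⋂₀ {B | A ⊆ B ∧ B ⊆ uSphere n ∧ SphConvex B}

/-- The set `C` of pairs of proper convex bodies contained in a common open hemisphere. -/
def pairsC (n : ℕ) : Set (Set (Esp n) × Set (Esp n)) :=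
  {p | ∃ u : Esp n, ‖u‖ = 1 ∧ p.1 ∈ properBodies u ∧ p.2 ∈ properBodies u}

/-- `u`-projection covariance of a binary operation on `K_u^p(S^n)`:
`(K|S) * (L|S) = (K*L)|S` for all great subspheres `S = V ∩ S^n` through `u`
with `0 ≤ k = dim S ≤ n − 1`. -/
def uProjCovariant {n : ℕ} (u : Esp n)
    (op : Set (Esp n) → Set (Esp n) → Set (Esp n)) : Prop :=
  ∀ V : Submodule ℝ (Esp n), u ∈ V → Module.finrank ℝ V ≤ n →
    ∀ K ∈ properBodies u, ∀ L ∈ properBodies u,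
      op (sphProj V K) (sphProj V L) = sphProj V (op K L)

/-- Projection covariance: `u`-projection covariance for every `u ∈ S^n`. -/
def projCovariantC {n : ℕ} (op : Set (Esp n) → Set (Esp n) → Set (Esp n)) : Prop :=
  ∀ u : Esp n, ‖u‖ = 1 → uProjCovariant u op

/-- Projection covariance for operations on compact convex subsets of `u^⊥`. -/
def eProjCovariant {n : ℕ} (u : Esp n)
    (op : Set (Esp n) → Set (Esp n) → Set (Esp n)) : Prop :=
  ∀ W : Submodule ℝ (Esp n), (W : Set (Esp n)) ⊆ hyper u →
    ∀ K ∈ cptCvx u, ∀ L ∈ cptCvx u,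
      op (eProj W K) (eProj W L) = eProj W (op K L)

/-!
Against the centre `v` and direction `w`, the point `cos l • u + sin l • w` has coordinates
`(⟪u, v⟫ cos l, sin l)`, so its term in `h_v(·, w)` is the signed angle `arctan (tan l / ⟪u, v⟫)`.
This increases with `l`, so the supremum over `[α, β]` is attained at `β`. Since
`I_u^w(α,β) = I_u^{-w}(-β,-α)`, the identity for `-w` is the one for `w` applied to `-w`.
-/

/-- The geodesic segment `I_u^w(α,β)`. -/
def sphSegment {n : ℕ} (u w : Esp n) (α β : ℝ) : Set (Esp n) :=
  {x | ∃ l ∈ Set.Icc α β, x = Real.cos l • u + Real.sin l • w}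

lemma sphSegment_eq_image {n : ℕ} (u w : Esp n) (α β : ℝ) :
    sphSegment u w α β = (fun l => Real.cos l • u + Real.sin l • w) '' Set.Icc α β := by
  ext x
  simp only [sphSegment, Set.mem_ofPred_eq, Set.mem_image, eq_comm]

lemma sphSegment_neg {n : ℕ} (u w : Esp n) (α β : ℝ) :
    sphSegment u (-w) (-β) (-α) = sphSegment u w α β := by
  ext x
  constructor <;> rintro ⟨l, ⟨hl₁, hl₂⟩, rfl⟩ <;> refine ⟨-l, ⟨by linarith, by linarith⟩, ?_⟩ <;>
    simp only [Real.cos_neg, Real.sin_neg, neg_smul, smul_neg, neg_neg]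

lemma arccos_div_sqrt_eq_arctan {a b : ℝ} (ha : 0 < a) (hb : 0 ≤ b) :
    Real.arccos (a / √(a ^ 2 + b ^ 2)) = Real.arctan (b / a) := by
  have hθ : 0 ≤ Real.arctan (b / a) := Real.arctan_nonneg.2 (div_nonneg hb ha.le)
  have hθπ : Real.arctan (b / a) ≤ π := by
    linarith [Real.arctan_lt_pi_div_two (b / a), Real.pi_pos]
  rw [← Real.arccos_cos hθ hθπ, Real.cos_arctan]
  congr 1
  have hsq : a ^ 2 + b ^ 2 = a ^ 2 * (1 + (b / a) ^ 2) := by field_simp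
  rw [hsq, Real.sqrt_mul (sq_nonneg a), Real.sqrt_sq ha.le, ← div_div, div_self ha.ne']

/-- The term of `sphSupp` contributed by a point with coordinates `a > 0` along the centre and
`b` along the direction is its signed angle `arctan (b / a)`. -/
lemma sign_mul_arccos_div_sqrt_eq_arctan {a : ℝ} (ha : 0 < a) (b : ℝ) :
    Real.sign b * Real.arccos (a / √(a ^ 2 + b ^ 2)) = Real.arctan (b / a) := by
  rcases lt_trichotomy b 0 with hb | rfl | hb
  · have h := arccos_div_sqrt_eq_arctan ha (neg_nonneg.2 hb.le)
    rw [neg_sq, neg_div, Real.arctan_neg] at h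
    rw [Real.sign_of_neg hb, h, neg_one_mul, neg_neg]
  · simp [Real.sign_zero]
  · rw [Real.sign_of_pos hb, one_mul, arccos_div_sqrt_eq_arctan ha hb.le]

theorem tan_sphSupp_sphSegment {n : ℕ} {u v w : Esp n} (hw : ‖w‖ = 1)
    (huw : ⟪u, w⟫ = 0) (hvw : ⟪v, w⟫ = 0) (huv : 0 < ⟪u, v⟫)
    {α β : ℝ} (hα : -(π / 2) < α) (hαβ : α ≤ β) (hβ : β < π / 2) :
    Real.tan (sphSupp v (sphSegment u w α β) w) = Real.tan β / ⟪u, v⟫ := by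
  set f : ℝ → ℝ := fun l => Real.arctan (Real.tan l / ⟪u, v⟫)
  have hIcc : Set.Icc α β ⊆ Set.Ioo (-(π / 2)) (π / 2) := fun l hl =>
    ⟨hα.trans_le hl.1, hl.2.trans_lt hβ⟩
  have hpoint : ∀ l ∈ Set.Icc α β,
      (fun x => Real.sign ⟪w, x⟫ * Real.arccos (⟪v, x⟫ / √(⟪v, x⟫ ^ 2 + ⟪w, x⟫ ^ 2)))
        (Real.cos l • u + Real.sin l • w) = f l := by
    intro l hl
    have hcos : 0 < Real.cos l := Real.cos_pos_of_mem_Ioo (hIcc hl)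
    have hv : ⟪v, Real.cos l • u + Real.sin l • w⟫ = ⟪u, v⟫ * Real.cos l := by
      rw [inner_add_right, real_inner_smul_right, real_inner_smul_right, hvw,
        real_inner_comm]
      ring
    have hw' : ⟪w, Real.cos l • u + Real.sin l • w⟫ = Real.sin l := by
      rw [inner_add_right, real_inner_smul_right, real_inner_smul_right, real_inner_comm,
        huw, real_inner_self_eq_norm_sq, hw]
      ring
    simp only [f, hv, hw']
    rw [sign_mul_arccos_div_sqrt_eq_arctan (mul_pos huv hcos), Real.tan_eq_sin_div_cos, div_div,
      mul_comm]
  have hmono : MonotoneOn f (Set.Icc α β) := fun a ha b hb hab =>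
    Real.arctan_strictMono.monotone <| div_le_div_of_nonneg_right
      (Real.strictMonoOn_tan.monotoneOn (hIcc ha) (hIcc hb) hab) huv.le
  have hmax : IsGreatest (f '' Set.Icc α β) (f β) :=
    ⟨Set.mem_image_of_mem f (Set.right_mem_Icc.2 hαβ),
      by rintro _ ⟨l, hl, rfl⟩; exact hmono hl (Set.right_mem_Icc.2 hαβ) hl.2⟩
  rw [sphSupp, sphSegment_eq_image, Set.image_image, Set.image_congr hpoint, hmax.csSup_eq,
    Real.tan_arctan]

theorem stmt11_general {n : ℕ} (u v w : Esp n)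
    (hw : ‖w‖ = 1)
    (huw : ⟪u, w⟫ = 0) (hvw : ⟪v, w⟫ = 0) (huv : 0 < ⟪u, v⟫)
    (α β : ℝ) (hα : -(π / 2) < α) (hαβ : α ≤ β) (hβ : β < π / 2) :
    Real.tan (sphSupp v
        {x | ∃ l ∈ Set.Icc α β, x = Real.cos l • u + Real.sin l • w} w) =
      Real.tan β / ⟪u, v⟫ ∧
    Real.tan (sphSupp v
        {x | ∃ l ∈ Set.Icc α β, x = Real.cos l • u + Real.sin l • w} (-w)) =
      -(Real.tan α / ⟪u, v⟫) := by
  refine ⟨tan_sphSupp_sphSegment hw huw hvw huv hα hαβ hβ, ?_⟩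
  have h := tan_sphSupp_sphSegment (u := u) (v := v) (norm_neg w ▸ hw)
    (by rw [inner_neg_right, huw, neg_zero]) (by rw [inner_neg_right, hvw, neg_zero]) huv
    (neg_lt_neg hβ) (neg_le_neg hαβ) (by linarith : -α < π / 2)
  rwa [sphSegment_neg, Real.tan_neg, neg_div] at h

/-- For the spherical segment
`I_u^w(α,β) = {cos λ • u + sin λ • w : λ ∈ [α,β]}` with `−π/2 < α ≤ β < π/2`, and
`v ∈ S_u^+`, `w ∈ S_u ∩ S_v`:
`tan h_v(I_u^w(α,β), w) = tan β / (u⬝v)` and `tan h_v(I_u^w(α,β), −w) = −tan α / (u⬝v)`. -/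
theorem stmt11 {n : ℕ} (hn : 2 ≤ n) (u v w : Esp n)
    (hu : ‖u‖ = 1) (hv : ‖v‖ = 1) (hw : ‖w‖ = 1)
    (huw : ⟪u, w⟫ = 0) (hvw : ⟪v, w⟫ = 0) (huv : 0 < ⟪u, v⟫)
    (α β : ℝ) (hα : -(π / 2) < α) (hαβ : α ≤ β) (hβ : β < π / 2) :
    Real.tan (sphSupp v
        {x | ∃ l ∈ Set.Icc α β, x = Real.cos l • u + Real.sin l • w} w) =
      Real.tan β / ⟪u, v⟫ ∧
    Real.tan (sphSupp v
        {x | ∃ l ∈ Set.Icc α β, x = Real.cos l • u + Real.sin l • w} (-w)) =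
      -(Real.tan α / ⟪u, v⟫) :=
  stmt11_general u v w hw huw hvw huv α β hα hαβ hβ
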